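/- arXiv:2112.08921 — 3 statements merged into one kernel-verified Lean document; each statement's English description precedes it below -/
import Mathlib

section
/- TQt-SVD existence: every Lth-order quaternion tensor A ∈ H^{N1×N2×N3×…×NL} admits a decomposition A = U ⋆_QT D ⋆_QT V^H, where U ∈ H^{N1×N1×N3×…×NL} and V ∈ H^{N2×N2×N3×…×NL} are unitary quaternion tensors and D ∈ H^{N1×N2×N3×…×NL} is f-diagonal (every frontal slice of D, equivalently of D̂, is a diagonal matrix). -/
open scoped Quaternion
open Matrix

noncomputable section

/-- An `L`th-order quaternion tensor, modeled as a family of frontal-slice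
quaternion matrices indexed by the multi-index `ν = (n₃,…,n_L) : ι`. -/
abbrev QT (ι : Type*) (m n : ℕ) := ι → Matrix (Fin m) (Fin n) ℍ[ℝ]

variable {ι : Type*} [Fintype ι] [DecidableEq ι]

/-- The hat transform `Â = A ×₃ T₃ ⋯ ×_L T_L`, with `T` the combined invertible
quaternion transform acting on the tube fibers. -/
def hatT (T : Matrix ι ι ℍ[ℝ]) {m n : ℕ} (A : QT ι m n) : QT ι m n :=
  fun ν i j => ∑ μ, T ν μ * A μ i j

/-- The facewise product `⋆_QF`: slice-wise quaternion matrix product. -/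
def qf {m p n : ℕ} (A : QT ι m p) (B : QT ι p n) : QT ι m n :=
  fun ν => A ν * B ν

/-- The `⋆_QT` product; `T` is the combined transform and `S` its inverse. -/
def qt (T S : Matrix ι ι ℍ[ℝ]) {m p n : ℕ} (A : QT ι m p) (B : QT ι p n) : QT ι m n :=
  hatT S (qf (hatT T A) (hatT T B))

/-- The identity quaternion tensor: every transform-domain slice is `I_P`. -/
def qtId (S : Matrix ι ι ℍ[ℝ]) (p : ℕ) : QT ι p p := hatT S (fun _ => 1)

/-- Conjugate transpose, defined slice-wise in the transform domain. -/
def qtH (T S : Matrix ι ι ℍ[ℝ]) {m n : ℕ} (A : QT ι m n) : QT ι n m :=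
  hatT S (fun ν => (hatT T A ν)ᴴ)

/-- A quaternion matrix is unitary. -/
def qUnitaryM {p : Type*} [Fintype p] [DecidableEq p] (Q : Matrix p p ℍ[ℝ]) : Prop :=
  Qᴴ * Q = 1 ∧ Q * Qᴴ = 1

/-- A quaternion tensor is unitary for the `⋆_QT` product. -/
def qtUnitary (T S : Matrix ι ι ℍ[ℝ]) {p : ℕ} (U : QT ι p p) : Prop :=
  qt T S (qtH T S U) U = qtId S p ∧ qt T S U (qtH T S U) = qtId S p

/-- Frobenius norm of a quaternion tensor. -/
def frob {m n : ℕ} (A : QT ι m n) : ℝ :=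
  Real.sqrt (∑ ν, ∑ i, ∑ j, ‖A ν i j‖ ^ 2)

/-- Frobenius norm of a quaternion matrix. -/
def frobM {m n : ℕ} (M : Matrix (Fin m) (Fin n) ℍ[ℝ]) : ℝ :=
  Real.sqrt (∑ i, ∑ j, ‖M i j‖ ^ 2)

/-- The `k`-th diagonal tube `D(k,k,:,…,:)` of a quaternion tensor. -/
def diagTube {m n : ℕ} (D : QT ι m n) (k : ℕ) : ι → ℍ[ℝ] :=
  fun ν => if h : k < m ∧ k < n then D ν ⟨k, h.1⟩ ⟨k, h.2⟩ else 0

/-- Frobenius norm of the `k`-th diagonal tube. -/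
def tubeNorm {m n : ℕ} (D : QT ι m n) (k : ℕ) : ℝ :=
  Real.sqrt (∑ ν, ‖diagTube D k ν‖ ^ 2)

/-- The TQt-rank: the number of nonzero diagonal tubes of the f-diagonal factor. -/
def tqtRank {m n : ℕ} (D : QT ι m n) : ℕ :=
  ((Finset.range (min m n)).filter (fun k => 0 < tubeNorm D k)).card

/-- Rank of a quaternion matrix: dimension of the span of its columns as a
right `ℍ`-module (i.e. a module over `ℍᵐᵒᵖ`). -/
def qrank {m n : ℕ} (M : Matrix (Fin m) (Fin n) ℍ[ℝ]) : ℕ :=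
  Module.finrank ℍ[ℝ]ᵐᵒᵖ
    (Submodule.span ℍ[ℝ]ᵐᵒᵖ (Set.range fun j : Fin n => fun i : Fin m => M i j))

/-- Real diagonal quaternion matrix with diagonal entries `σ 0, σ 1, …`. -/
def realDiag (m n : ℕ) (σ : ℕ → ℝ) : Matrix (Fin m) (Fin n) ℍ[ℝ] :=
  fun i j => if (i : ℕ) = (j : ℕ) then ((σ (i : ℕ) : ℝ) : ℍ[ℝ]) else 0

/-- Truncated real diagonal matrix keeping only the first `s` diagonal entries. -/
def realDiagTrunc (m n : ℕ) (σ : ℕ → ℝ) (s : ℕ) : Matrix (Fin m) (Fin n) ℍ[ℝ] :=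
  fun i j => if (i : ℕ) = (j : ℕ) ∧ (i : ℕ) < s then ((σ (i : ℕ) : ℝ) : ℍ[ℝ]) else 0



/-!
Everything happens slice by slice in the transform domain. Since `T` and `S` are mutually
inverse, `X ↦ X̂` is a bijection turning `⋆_QT` into the facewise product and the tensor
conjugate transpose into the slice-wise one, so it suffices to take an SVD of every slice of `Â`
and to pull the three factors back with `S`.

The SVD of a quaternion matrix `M` comes from the spectral theorem for the Hermitian matrix
`MᴴM`. Regarded as a real symmetric operator on `ℍⁿ ≅ ℝ⁴ⁿ`, it preserves the quaternionic
orthogonal complement of any family of its eigenvectors, and by a real dimension count that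
complement is nonzero while the family has fewer than `n` members, so an orthonormal eigenbasis
`(vⱼ)` is built one vector at a time. The vectors `M vⱼ` are then pairwise orthogonal; normalizing
the nonzero ones and completing them to an orthonormal basis gives `U`.
-/

namespace Quaternion

lemma re_sum {κ : Type*} [Fintype κ] (f : κ → ℍ[ℝ]) : (∑ i, f i).re = ∑ i, (f i).re :=
  map_sum (QuaternionAlgebra.reₗ _ _ _) f _

lemma coe_sum {κ : Type*} [Fintype κ] (f : κ → ℝ) : ((∑ i, f i : ℝ) : ℍ[ℝ]) = ∑ i, (f i : ℍ[ℝ]) :=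
  map_sum (algebraMap ℝ ℍ[ℝ]) f _

end Quaternion

namespace QuaternionMatrix

section

variable {m n κ : Type*} [Fintype n]

lemma re_dotProduct_comm (u v : n → ℍ[ℝ]) : (u ⬝ᵥ v).re = (v ⬝ᵥ u).re := by
  simp only [dotProduct, Quaternion.re_sum, Quaternion.re_mul]
  exact Finset.sum_congr rfl fun _ _ => by ring

lemma star_real_smul (a : ℝ) (x : κ → ℍ[ℝ]) : star (a • x) = a • star x := by
  funext i
  ext <;> simp

lemma star_smul_dotProduct_smul (a b : ℝ) (x y : n → ℍ[ℝ]) :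
    star (a • x) ⬝ᵥ (b • y) = (a * b) • (star x ⬝ᵥ y) := by
  rw [star_real_smul, smul_dotProduct, dotProduct_smul, smul_smul]

lemma star_dotProduct_self (x : n → ℍ[ℝ]) :
    star x ⬝ᵥ x = ((‖(WithLp.toLp 2 x : EuclideanSpace ℍ[ℝ] n)‖ ^ 2 : ℝ) : ℍ[ℝ]) := by
  rw [PiLp.norm_sq_eq_of_L2]
  simp only [dotProduct, Pi.star_apply, Quaternion.star_mul_self,
    Quaternion.normSq_eq_norm_mul_self, Quaternion.coe_sum, sq]

def mulVecₗ (M : Matrix κ n ℍ[ℝ]) : (n → ℍ[ℝ]) →ₗ[ℝ] κ → ℍ[ℝ] where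
  toFun := M.mulVec
  map_add' := M.mulVec_add
  map_smul' := M.mulVec_smul

/-- `H` as an `ℝ`-linear operator on `ℍⁿ`, made a real inner product space by
`⟪x, y⟫ = re (star y ⬝ᵥ x)` (see `real_inner_eq_re_dotProduct`), so that the spectral theory of
symmetric operators applies to it. -/
def toEuclideanLin (H : Matrix n n ℍ[ℝ]) : Module.End ℝ (EuclideanSpace ℍ[ℝ] n) :=
  (WithLp.linearEquiv 2 ℝ (n → ℍ[ℝ])).symm.toLinearMap ∘ₗ mulVecₗ H ∘ₗ
    (WithLp.linearEquiv 2 ℝ (n → ℍ[ℝ])).toLinearMap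

lemma toEuclideanLin_apply (H : Matrix n n ℍ[ℝ]) (x : EuclideanSpace ℍ[ℝ] n) :
    toEuclideanLin H x = WithLp.toLp 2 (H *ᵥ x.ofLp) := rfl

lemma real_inner_eq_re_dotProduct (x y : EuclideanSpace ℍ[ℝ] n) :
    inner ℝ x y = (star y.ofLp ⬝ᵥ x.ofLp).re := by
  rw [PiLp.inner_apply, re_dotProduct_comm]
  simp [Quaternion.inner_def, dotProduct, Quaternion.re_sum]

lemma star_mulVec_dotProduct {H : Matrix n n ℍ[ℝ]} (hH : H.IsHermitian) (x y : n → ℍ[ℝ]) :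
    star (H *ᵥ x) ⬝ᵥ y = star x ⬝ᵥ (H *ᵥ y) := by
  rw [star_mulVec, hH.eq, dotProduct_mulVec]

lemma star_mulVec_dotProduct_mulVec [Fintype m] (M : Matrix m n ℍ[ℝ]) (x y : n → ℍ[ℝ]) :
    star (M *ᵥ x) ⬝ᵥ (M *ᵥ y) = star x ⬝ᵥ ((Mᴴ * M) *ᵥ y) := by
  rw [star_mulVec, ← dotProduct_mulVec, mulVec_mulVec]

lemma isSymmetric_toEuclideanLin {H : Matrix n n ℍ[ℝ]} (hH : H.IsHermitian) :
    (toEuclideanLin H).IsSymmetric := by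
  intro x y
  simp only [real_inner_eq_re_dotProduct, toEuclideanLin_apply, star_mulVec_dotProduct hH]

lemma finrank_fun_quaternion (κ : Type*) [Fintype κ] :
    Module.finrank ℝ (κ → ℍ[ℝ]) = 4 * Fintype.card κ := by
  rw [Module.finrank_pi_fintype, Quaternion.finrank_eq_four, Finset.sum_const, smul_eq_mul,
    mul_comm, Finset.card_univ]

def orthSubspace (v : κ → n → ℍ[ℝ]) : Submodule ℝ (EuclideanSpace ℍ[ℝ] n) :=
  LinearMap.ker (mulVecₗ (Matrix.of fun k => star (v k)) ∘ₗ
    (WithLp.linearEquiv 2 ℝ (n → ℍ[ℝ])).toLinearMap)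

lemma mem_orthSubspace {v : κ → n → ℍ[ℝ]} {x : EuclideanSpace ℍ[ℝ] n} :
    x ∈ orthSubspace v ↔ ∀ k, star (v k) ⬝ᵥ x.ofLp = 0 :=
  LinearMap.mem_ker.trans funext_iff

lemma nontrivial_orthSubspace [Fintype κ] (v : κ → n → ℍ[ℝ])
    (h : Fintype.card κ < Fintype.card n) : Nontrivial (orthSubspace v) :=
  Submodule.nontrivial_iff_ne_bot.mpr <| LinearMap.ker_ne_bot_of_finrank_lt <| by
    rw [(WithLp.linearEquiv 2 ℝ (n → ℍ[ℝ])).finrank_eq, finrank_fun_quaternion,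
      finrank_fun_quaternion]
    omega

lemma exists_unit_eigenvector_orthogonal [Fintype κ] {H : Matrix n n ℍ[ℝ]} (hH : H.IsHermitian)
    (v : κ → n → ℍ[ℝ]) (μ : κ → ℝ) (hv : ∀ k, H *ᵥ v k = μ k • v k)
    (h : Fintype.card κ < Fintype.card n) :
    ∃ (x : n → ℍ[ℝ]) (c : ℝ),
      star x ⬝ᵥ x = 1 ∧ (∀ k, star (v k) ⬝ᵥ x = 0) ∧ H *ᵥ x = c • x := by
  have hC : ∀ x ∈ orthSubspace v, toEuclideanLin H x ∈ orthSubspace v := by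
    simp only [mem_orthSubspace, toEuclideanLin_apply]
    intro x hx k
    rw [← star_mulVec_dotProduct hH, hv, star_real_smul, smul_dotProduct, hx k, smul_zero]
  have := nontrivial_orthSubspace v h
  obtain ⟨c, ⟨y, hyC⟩, hy⟩ :
      ∃ c : ℝ, ∃ y, Module.End.HasEigenvector ((toEuclideanLin H).restrict hC) c y :=
    ⟨_, ((isSymmetric_toEuclideanLin hH).restrict_invariant hC
      ).hasEigenvalue_iSup_of_finiteDimensional.exists_hasEigenvector⟩
  have hy0 : y ≠ 0 := by simpa using hy.2
  have hHy : H *ᵥ y.ofLp = c • y.ofLp := by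
    simpa [toEuclideanLin_apply] using congrArg (fun z => (z.1 : EuclideanSpace ℍ[ℝ] n).ofLp)
      hy.apply_eq_smul
  refine ⟨(‖y‖⁻¹ • y).ofLp, c, ?_, mem_orthSubspace.mp ((orthSubspace v).smul_mem _ hyC), ?_⟩
  · have hx : ‖‖y‖⁻¹ • y‖ = 1 := by simp [norm_smul, hy0]
    rw [star_dotProduct_self, WithLp.toLp_ofLp, hx, one_pow, Quaternion.coe_one]
  · rw [WithLp.ofLp_smul, mulVec_smul, hHy, smul_comm]

variable [DecidableEq m]

def OrthonormalOn (s : Finset m) (v : m → n → ℍ[ℝ]) : Prop :=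
  ∀ i ∈ s, ∀ j ∈ s, star (v i) ⬝ᵥ v j = if i = j then 1 else 0

lemma OrthonormalOn.insert {s : Finset m} {v : m → n → ℍ[ℝ]} {a : m} {x : n → ℍ[ℝ]}
    (hv : OrthonormalOn s v) (hx : star x ⬝ᵥ x = 1) (hxv : ∀ i ∈ s, star (v i) ⬝ᵥ x = 0) :
    OrthonormalOn (insert a s) (Function.update v a x) := by
  intro i hi j hj
  rw [Finset.mem_insert] at hi hj
  rcases eq_or_ne i a with rfl | hia <;> rcases eq_or_ne j i with rfl | hji
  · simp [hx]
  · have hj : j ∈ s := hj.resolve_left hji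
    rw [Function.update_self, Function.update_of_ne hji, star_dotProduct, hxv j hj, star_zero,
      if_neg hji.symm]
  · simpa [hia] using hv j (hi.resolve_left hia) j (hi.resolve_left hia)
  · rcases eq_or_ne j a with rfl | hja
    · simp [hia, hxv i (hi.resolve_left hia)]
    · simpa [hia, hja] using hv i (hi.resolve_left hia) j (hj.resolve_left hja)

theorem exists_orthonormal_eigenbasis_extending [DecidableEq n] {H : Matrix n n ℍ[ℝ]}
    (hH : H.IsHermitian) (s : Finset n) (v : n → n → ℍ[ℝ]) (μ : n → ℝ) (hv : OrthonormalOn s v)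
    (hHv : ∀ i ∈ s, H *ᵥ v i = μ i • v i) :
    ∃ (w : n → n → ℍ[ℝ]) (μ' : n → ℝ), OrthonormalOn Finset.univ w ∧
      (∀ i, H *ᵥ w i = μ' i • w i) ∧ ∀ i ∈ s, w i = v i := by
  obtain ⟨t, rfl⟩ : ∃ t : Finset n, s = tᶜ := ⟨sᶜ, (compl_compl s).symm⟩
  induction t using Finset.induction_on generalizing v μ with
  | empty =>
    rw [Finset.compl_empty] at hv hHv
    exact ⟨v, μ, hv, fun i => hHv i (Finset.mem_univ i), fun _ _ => rfl⟩
  | @insert a t ha ih =>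
    have has : a ∉ (insert a t)ᶜ := by simp
    obtain ⟨x, c, hx, hxv, hHx⟩ := exists_unit_eigenvector_orthogonal hH
      (fun k : ↥(insert a t)ᶜ => v k) (fun k => μ k) (fun k => hHv k k.2)
      (by rw [Fintype.card_coe]; exact Finset.card_lt_univ_of_notMem has)
    have hcompl : tᶜ = insert a (insert a t)ᶜ := by
      ext i; by_cases h : i = a <;> simp [h, ha]
    obtain ⟨w, μ', hw, hHw, hwv⟩ := ih (Function.update v a x) (Function.update μ a c)
      (hcompl ▸ hv.insert hx fun i hi => hxv ⟨i, hi⟩)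
      (by
        rw [hcompl]
        intro i hi
        rcases eq_or_ne i a with rfl | hia
        · simpa using hHx
        · simpa [hia] using hHv i ((Finset.mem_insert.mp hi).resolve_left hia))
    refine ⟨w, μ', hw, hHw, fun i hi => ?_⟩
    have hia : i ≠ a := by rintro rfl; exact has hi
    rw [hwv i (hcompl ▸ Finset.mem_insert_of_mem hi), Function.update_of_ne hia]

lemma OrthonormalOn.extend [DecidableEq κ] {s : Finset κ} {v : κ → n → ℍ[ℝ]}
    (hv : OrthonormalOn s v) (e : κ ↪ m) : OrthonormalOn (s.map e) (Function.extend e v 0) := by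
  simp only [OrthonormalOn, Finset.forall_mem_map, e.injective.extend_apply, e.injective.eq_iff]
  exact hv

lemma qUnitaryM_transpose_of_orthonormalOn [Fintype m] {w : m → m → ℍ[ℝ]}
    (hw : OrthonormalOn Finset.univ w) :
    qUnitaryM (Matrix.of w)ᵀ := by
  have h : ((Matrix.of w)ᵀ)ᴴ * (Matrix.of w)ᵀ = 1 := by
    refine Matrix.ext fun i j => ?_
    simpa [mul_apply, dotProduct, one_apply] using hw i (Finset.mem_univ _) j (Finset.mem_univ _)
  exact ⟨h, mul_eq_one_comm.mp h⟩

theorem exists_orthonormal_basis_of_pairwise_orthogonal [Fintype m] [Fintype κ] [DecidableEq κ]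
    (e : κ ↪ m) (y : κ → m → ℍ[ℝ]) (hy : Pairwise fun i j => star (y i) ⬝ᵥ y j = 0) :
    ∃ u : m → m → ℍ[ℝ], OrthonormalOn Finset.univ u ∧
      ∀ j, y j = ‖WithLp.toLp 2 (y j)‖ • u (e j) := by
  classical
  set J := Finset.univ.filter fun j => y j ≠ 0
  set z : κ → m → ℍ[ℝ] := fun j => ‖WithLp.toLp 2 (y j)‖⁻¹ • y j
  have hz : OrthonormalOn J z := by
    intro i hi j hj
    simp only [z, star_smul_dotProduct_smul]
    rcases eq_or_ne i j with rfl | hij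
    · have hi0 : ‖WithLp.toLp 2 (y i)‖ ≠ 0 := by simpa [J] using hi
      rw [star_dotProduct_self, ← Quaternion.coe_smul, smul_eq_mul, if_pos rfl]
      field_simp
      simp
    · rw [hy hij, smul_zero, if_neg hij]
  -- with `H = 0` the eigenbasis extension is plain completion to an orthonormal basis
  obtain ⟨u, -, hu, -, huz⟩ := exists_orthonormal_eigenbasis_extending isHermitian_zero
    (J.map e) (Function.extend e z 0) 0 (hz.extend e) (by simp)
  refine ⟨u, hu, fun j => ?_⟩
  by_cases hj : y j = 0
  · simp [hj]
  · rw [huz (e j) (Finset.mem_map_of_mem e (by simpa [J] using hj)), e.injective.extend_apply,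
      smul_smul, mul_inv_cancel₀ (by simpa using hj), one_smul]

theorem exists_svd_of_embedding [Fintype m] [DecidableEq n] (e : n ↪ m) (M : Matrix m n ℍ[ℝ]) :
    ∃ (U : Matrix m m ℍ[ℝ]) (D : Matrix m n ℍ[ℝ]) (V : Matrix n n ℍ[ℝ]),
      qUnitaryM U ∧ qUnitaryM V ∧ (∀ i j, i ≠ e j → D i j = 0) ∧ M = U * D * Vᴴ := by
  obtain ⟨w, μ, hw, hMw, -⟩ := exists_orthonormal_eigenbasis_extending
    (isHermitian_conjTranspose_mul_self M) ∅ 0 0 (by simp [OrthonormalOn]) (by simp)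
  have horth : Pairwise fun i j => star (M *ᵥ w i) ⬝ᵥ (M *ᵥ w j) = 0 := by
    intro i j hij
    rw [star_mulVec_dotProduct_mulVec, hMw, dotProduct_smul,
      hw i (Finset.mem_univ _) j (Finset.mem_univ _), if_neg hij, smul_zero]
  obtain ⟨u, hu, hMwu⟩ := exists_orthonormal_basis_of_pairwise_orthogonal e _ horth
  set D : Matrix m n ℍ[ℝ] := Matrix.of fun i j =>
    if i = e j then ((‖WithLp.toLp 2 (M *ᵥ w j)‖ : ℝ) : ℍ[ℝ]) else 0
  have hMV : M * (Matrix.of w)ᵀ = (Matrix.of u)ᵀ * D := by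
    refine Matrix.ext fun k j => ?_
    have := congrFun (hMwu j) k
    simp only [mulVec, dotProduct, Pi.smul_apply] at this
    simp [mul_apply, D, this, Quaternion.mul_coe_eq_smul]
  have hV := qUnitaryM_transpose_of_orthonormalOn hw
  refine ⟨(Matrix.of u)ᵀ, D, (Matrix.of w)ᵀ, qUnitaryM_transpose_of_orthonormalOn hu, hV,
    fun i j h => if_neg h, ?_⟩
  rw [← hMV, Matrix.mul_assoc, hV.2, Matrix.mul_one]

end

theorem exists_svd {m n : ℕ} (M : Matrix (Fin m) (Fin n) ℍ[ℝ]) :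
    ∃ (U : Matrix (Fin m) (Fin m) ℍ[ℝ]) (D : Matrix (Fin m) (Fin n) ℍ[ℝ])
      (V : Matrix (Fin n) (Fin n) ℍ[ℝ]), qUnitaryM U ∧ qUnitaryM V ∧
      (∀ (i : Fin m) (j : Fin n), (i : ℕ) ≠ j → D i j = 0) ∧ M = U * D * Vᴴ := by
  rcases le_total n m with h | h
  · obtain ⟨U, D, V, hU, hV, hD, hM⟩ := exists_svd_of_embedding (Fin.castLEEmb h) M
    exact ⟨U, D, V, hU, hV, fun i j hij => hD i j fun h' => hij (by simp [h']), hM⟩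
  · obtain ⟨U, D, V, hU, hV, hD, hM⟩ := exists_svd_of_embedding (Fin.castLEEmb h) Mᴴ
    refine ⟨V, Dᴴ, U, hV, hU, fun i j hij => ?_, ?_⟩
    · rw [conjTranspose_apply, hD j i fun h' => hij (by simp [h']), star_zero]
    · rw [← conjTranspose_conjTranspose M, hM]
      simp only [conjTranspose_mul, conjTranspose_conjTranspose, Matrix.mul_assoc]

end QuaternionMatrix

section TransformDomain

variable {T S : Matrix ι ι ℍ[ℝ]}

lemma hatT_hatT (hTS : T * S = 1) {m n : ℕ} (X : QT ι m n) : hatT T (hatT S X) = X := by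
  funext ν i j
  show (T *ᵥ (S *ᵥ fun μ => X μ i j)) ν = X ν i j
  rw [mulVec_mulVec, hTS, one_mulVec]

lemma qt_hatT_hatT (hTS : T * S = 1) {m p n : ℕ} (X : QT ι m p) (Y : QT ι p n) :
    qt T S (hatT S X) (hatT S Y) = hatT S (qf X Y) := by
  rw [qt, hatT_hatT hTS, hatT_hatT hTS]

lemma qtH_hatT (hTS : T * S = 1) {m n : ℕ} (X : QT ι m n) :
    qtH T S (hatT S X) = hatT S fun ν => (X ν)ᴴ := by
  rw [qtH, hatT_hatT hTS]

lemma qtUnitary_hatT (hTS : T * S = 1) {p : ℕ} {X : QT ι p p} (hX : ∀ ν, qUnitaryM (X ν)) :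
    qtUnitary T S (hatT S X) := by
  simp only [qtUnitary, qtH_hatT hTS, qt_hatT_hatT hTS, qtId]
  exact ⟨congrArg _ (funext fun ν => (hX ν).1), congrArg _ (funext fun ν => (hX ν).2)⟩

end TransformDomain

/-- TQt-SVD existence. -/
theorem stmt5 {ι : Type*} [Fintype ι] [DecidableEq ι]
    (T S : Matrix ι ι ℍ[ℝ]) (hST : S * T = 1) (hTS : T * S = 1)
    {N1 N2 : ℕ} (A : QT ι N1 N2) :
    ∃ (U : QT ι N1 N1) (D : QT ι N1 N2) (V : QT ι N2 N2),
      qtUnitary T S U ∧ qtUnitary T S V ∧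
      (∀ ν (i : Fin N1) (j : Fin N2), (i : ℕ) ≠ (j : ℕ) → hatT T D ν i j = 0) ∧
      A = qt T S U (qt T S D (qtH T S V)) := by
  choose U D V hU hV hD hA using fun ν => QuaternionMatrix.exists_svd (hatT T A ν)
  refine ⟨hatT S U, hatT S D, hatT S V, qtUnitary_hatT hTS hU, qtUnitary_hatT hTS hV,
    fun ν i j hij => by rw [hatT_hatT hTS]; exact hD ν i j hij, ?_⟩
  rw [qtH_hatT hTS, qt_hatT_hatT hTS, qt_hatT_hatT hTS, ← hatT_hatT hST A]
  congr 1
  funext ν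
  simp only [qf, hA ν, Matrix.mul_assoc]

end
end

section
/- Multiplication by a unitary quaternion tensor preserves the Frobenius norm up to the transform constants: if U ∈ H^{N1×N1×N3×…×NL} is unitary for the ⋆_QT-product built from transforms T_n = c_n U_n (c_n ∈ ℝ\{0}, U_n unitary quaternion matrices), then for every quaternion tensor B ∈ H^{N1×N2×N3×…×NL}, ‖U ⋆_QT B‖_F = ‖B‖_F. -/
open scoped Quaternion
open Matrix

noncomputable section

variable {ι : Type*} [Fintype ι] [DecidableEq ι]

section Aux

lemma dot_self_coe {n : Type*} [Fintype n] (w : n → ℍ[ℝ]) :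
    star w ⬝ᵥ w = ((∑ i, ‖w i‖ ^ 2 : ℝ) : ℍ[ℝ]) := by
  rw [show ((∑ i, ‖w i‖ ^ 2 : ℝ) : ℍ[ℝ]) = ∑ i, ((‖w i‖ ^ 2 : ℝ) : ℍ[ℝ]) from
    map_sum (algebraMap ℝ ℍ[ℝ]) _ _]
  simp only [dotProduct, Pi.star_apply, Quaternion.star_mul_self]
  refine Finset.sum_congr rfl fun i _ => ?_
  rw [Quaternion.normSq_eq_norm_mul_self, sq]

lemma mulVec_sumsq {n : Type*} [Fintype n] [DecidableEq n]
    (Q : Matrix n n ℍ[ℝ]) (hQ : Qᴴ * Q = 1) (v : n → ℍ[ℝ]) :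
    ∑ i, ‖(Q *ᵥ v) i‖ ^ 2 = ∑ i, ‖v i‖ ^ 2 := by
  have key : star (Q *ᵥ v) ⬝ᵥ (Q *ᵥ v) = star v ⬝ᵥ v := by
    rw [Matrix.star_mulVec, Matrix.dotProduct_mulVec, Matrix.vecMul_vecMul, hQ,
      Matrix.vecMul_one]
  rw [dot_self_coe, dot_self_coe] at key
  exact Quaternion.coe_injective key

lemma mul_sumsq {m n : ℕ} (Q : Matrix (Fin m) (Fin m) ℍ[ℝ]) (hQ : Qᴴ * Q = 1)
    (M : Matrix (Fin m) (Fin n) ℍ[ℝ]) :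
    ∑ i, ∑ j, ‖(Q * M) i j‖ ^ 2 = ∑ i, ∑ j, ‖M i j‖ ^ 2 := by
  rw [Finset.sum_comm, Finset.sum_comm (s := Finset.univ) (t := Finset.univ)
    (f := fun i j => ‖M i j‖ ^ 2)]
  refine Finset.sum_congr rfl fun j _ => ?_
  have h : ∀ i, (Q * M) i j = (Q *ᵥ fun k => M k j) i := by
    intro i; simp [Matrix.mul_apply, Matrix.mulVec, dotProduct]
  simp only [h]
  exact mulVec_sumsq Q hQ _

variable {ι : Type*} [Fintype ι] [DecidableEq ι]

lemma hat_hat (T S : Matrix ι ι ℍ[ℝ]) (h : T * S = 1) {m n : ℕ} (A : QT ι m n) :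
    hatT T (hatT S A) = A := by
  funext ν i j
  simp only [hatT, Finset.mul_sum, ← mul_assoc]
  rw [Finset.sum_comm]
  have : ∀ ρ, ∑ μ, T ν μ * S μ ρ * A ρ i j = (T * S) ν ρ * A ρ i j := by
    intro ρ; rw [Matrix.mul_apply, Finset.sum_mul]
  simp only [this, h, Matrix.one_apply]
  simp [Finset.sum_ite_eq, ite_mul]

lemma hat_sumsq (c : ℝ) (Q : Matrix ι ι ℍ[ℝ]) (hQ : Qᴴ * Q = 1) {m n : ℕ}
    (A : QT ι m n) :
    ∑ ν, ∑ i, ∑ j, ‖hatT (c • Q) A ν i j‖ ^ 2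
      = c ^ 2 * ∑ ν, ∑ i, ∑ j, ‖A ν i j‖ ^ 2 := by
  have swap : ∀ (X : QT ι m n), ∑ ν, ∑ i, ∑ j, ‖X ν i j‖ ^ 2
      = ∑ i, ∑ j, ∑ ν, ‖X ν i j‖ ^ 2 := by
    intro X
    rw [Finset.sum_comm]
    exact Finset.sum_congr rfl fun i _ => Finset.sum_comm
  rw [swap, swap, Finset.mul_sum]
  refine Finset.sum_congr rfl fun i _ => ?_
  rw [Finset.mul_sum]
  refine Finset.sum_congr rfl fun j _ => ?_
  have h : ∀ ν, hatT (c • Q) A ν i j = c • ((Q *ᵥ fun μ => A μ i j) ν) := by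
    intro ν
    simp [hatT, Matrix.mulVec, dotProduct, Finset.smul_sum, smul_mul_assoc]
  simp only [h, norm_smul, Real.norm_eq_abs, mul_pow, sq_abs, ← Finset.mul_sum]
  rw [mulVec_sumsq Q hQ]

end Aux

/-- multiplication by a `⋆_QT`-unitary quaternion tensor preserves the
Frobenius norm when the transforms are multiples of unitaries. -/
theorem stmt11 {ι : Type*} [Fintype ι] [DecidableEq ι]
    {K : ℕ} (cs : Fin K → ℝ) (hcs : ∀ k, cs k ≠ 0)
    (U₀ : Matrix ι ι ℍ[ℝ]) (hU₀ : qUnitaryM U₀)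
    (T S : Matrix ι ι ℍ[ℝ]) (hT : T = (∏ k, cs k) • U₀) (hS : S = (∏ k, cs k)⁻¹ • U₀ᴴ)
    {N1 N2 : ℕ} (U : QT ι N1 N1) (hU : qtUnitary T S U) (B : QT ι N1 N2) :
    frob (qt T S U B) = frob B := by
  have hc : (∏ k, cs k) ≠ 0 := Finset.prod_ne_zero_iff.mpr fun k _ => hcs k
  set c := ∏ k, cs k with hcdef
  have hTS : T * S = 1 := by
    rw [hT, hS, Matrix.smul_mul, Matrix.mul_smul, smul_smul, mul_inv_cancel₀ hc,
      hU₀.2, one_smul]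
  have hslice : ∀ ν, (hatT T U ν)ᴴ * hatT T U ν = 1 := by
    intro ν
    have h1 := congrArg (hatT T) hU.1
    rw [qt, hat_hat T S hTS, qtId, hat_hat T S hTS, qtH, hat_hat T S hTS] at h1
    exact congrFun h1 ν
  have key : ∑ ν, ∑ i, ∑ j, ‖qt T S U B ν i j‖ ^ 2
      = ∑ ν, ∑ i, ∑ j, ‖B ν i j‖ ^ 2 := by
    have hUH : (U₀ᴴ)ᴴ * U₀ᴴ = 1 := by
      rw [Matrix.conjTranspose_conjTranspose]; exact hU₀.2
    have e1 : qt T S U B = hatT ((c⁻¹) • U₀ᴴ) (qf (hatT T U) (hatT T B)) := by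
      rw [qt, hS]
    rw [e1, hat_sumsq _ _ hUH]
    have e2 : ∑ ν, ∑ i, ∑ j, ‖qf (hatT T U) (hatT T B) ν i j‖ ^ 2
        = ∑ ν, ∑ i, ∑ j, ‖hatT T B ν i j‖ ^ 2 := by
      refine Finset.sum_congr rfl fun ν _ => ?_
      simpa only [qf] using mul_sumsq _ (hslice ν) (hatT T B ν)
    rw [e2]
    have e3 : hatT T B = hatT (c • U₀) B := by rw [hT]
    rw [e3, hat_sumsq c U₀ hU₀.1, ← mul_assoc]
    have hone : (c⁻¹) ^ 2 * c ^ 2 = 1 := by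
      field_simp
    rw [hone, one_mul]
  rw [frob, frob, key]

end
end

section
/- Frobenius norm identity from the TQt-SVD: if A = U ⋆_QT D ⋆_QT V^H with transforms T_n = c_n U_n satisfying ∏_{n=3}^{L} |c_n| = 1, then ‖A‖_F² = Σ_{k=1}^{min(N1,N2)} σ_k², where σ_k = ‖D(k,k,:,…,:)‖_F are the singular values of the quaternion tensor A. -/
open scoped Quaternion
open Matrix

noncomputable section

variable {ι : Type*} [Fintype ι] [DecidableEq ι]

/-! Since `|∏ cₙ| = 1`, the combined transform `T` is unitary and `S = Tᴴ`. A unitary transform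
along the tubes preserves the norm of every tube, hence both the Frobenius norm of a tensor and the
norms of its diagonal tubes. In the transform domain `Â_ν = Û_ν D̂_ν V̂_νᴴ` with `Û_ν`, `V̂_ν`
unitary, so `‖A‖_F = ‖Â‖_F = ‖D̂‖_F`, and since `D̂` is f-diagonal, `‖D̂‖_F²` is the sum of the
squared norms of its diagonal tubes, which are those of `D`. -/

lemma coe_sum_norm_sq {p : Type*} [Fintype p] (x : p → ℍ[ℝ]) :
    ((∑ i, ‖x i‖ ^ 2 : ℝ) : ℍ[ℝ]) = star x ⬝ᵥ x := by
  simp only [← Quaternion.algebraMap_def, map_sum, dotProduct, Pi.star_apply,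
    Quaternion.star_mul_self, Quaternion.normSq_eq_norm_mul_self, sq]

lemma sum_norm_sq_mulVec_of_conjTranspose_mul_self {p : Type*} [Fintype p] [DecidableEq p]
    {Q : Matrix p p ℍ[ℝ]} (hQ : Qᴴ * Q = 1) (x : p → ℍ[ℝ]) :
    ∑ i, ‖(Q *ᵥ x) i‖ ^ 2 = ∑ i, ‖x i‖ ^ 2 := by
  apply Quaternion.coe_injective
  rw [coe_sum_norm_sq, coe_sum_norm_sq, star_mulVec, dotProduct_mulVec, vecMul_vecMul, hQ,
    vecMul_one]

lemma conjTranspose_real_smul {p q : Type*} (c : ℝ) (M : Matrix p q ℍ[ℝ]) :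
    (c • M)ᴴ = c • Mᴴ := by
  refine Matrix.ext fun i j => ?_
  simp only [conjTranspose_apply, Matrix.smul_apply, Quaternion.star_smul]

lemma qUnitaryM.real_smul {p : Type*} [Fintype p] [DecidableEq p] {Q : Matrix p p ℍ[ℝ]}
    (hQ : qUnitaryM Q) {c : ℝ} (hc : |c| = 1) : qUnitaryM (c • Q) := by
  have hcc : c * c = 1 := by rw [← abs_mul_abs_self, hc, one_mul]
  constructor <;>
    rw [conjTranspose_real_smul, smul_mul_smul_comm, hcc, one_smul]
  exacts [hQ.1, hQ.2]

lemma inv_smul_conjTranspose_of_abs_eq_one {p q : Type*} {c : ℝ} (hc : |c| = 1)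
    (M : Matrix p q ℍ[ℝ]) : c⁻¹ • Mᴴ = (c • M)ᴴ := by
  have hinv : c⁻¹ = c := inv_eq_of_mul_eq_one_right (by rw [← abs_mul_abs_self, hc, one_mul])
  rw [hinv, conjTranspose_real_smul]

section FrobeniusMatrix

variable {m n : ℕ}

lemma frobM_sq (M : Matrix (Fin m) (Fin n) ℍ[ℝ]) : frobM M ^ 2 = ∑ i, ∑ j, ‖M i j‖ ^ 2 :=
  Real.sq_sqrt (by positivity)

lemma frobM_mul_left_of_conjTranspose_mul_self {Q : Matrix (Fin m) (Fin m) ℍ[ℝ]}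
    (hQ : Qᴴ * Q = 1) (M : Matrix (Fin m) (Fin n) ℍ[ℝ]) : frobM (Q * M) = frobM M := by
  unfold frobM
  congr 1
  rw [Finset.sum_comm, Finset.sum_comm (f := fun i j => ‖M i j‖ ^ 2)]
  exact Finset.sum_congr rfl fun j _ =>
    sum_norm_sq_mulVec_of_conjTranspose_mul_self hQ fun k => M k j

lemma frobM_conjTranspose (M : Matrix (Fin m) (Fin n) ℍ[ℝ]) : frobM Mᴴ = frobM M := by
  simp only [frobM, conjTranspose_apply, Quaternion.norm_star]
  rw [Finset.sum_comm]

lemma frobM_mul_conjTranspose_of_conjTranspose_mul_self {W : Matrix (Fin n) (Fin n) ℍ[ℝ]}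
    (hW : Wᴴ * W = 1) (M : Matrix (Fin m) (Fin n) ℍ[ℝ]) : frobM (M * Wᴴ) = frobM M := by
  rw [← frobM_conjTranspose, conjTranspose_mul, conjTranspose_conjTranspose,
    frobM_mul_left_of_conjTranspose_mul_self hW, frobM_conjTranspose]

end FrobeniusMatrix

section Tensor

variable {ι : Type*} [Fintype ι] {T S : Matrix ι ι ℍ[ℝ]} {m p n : ℕ}

lemma hatT_hatT_s14 (P Q : Matrix ι ι ℍ[ℝ]) (A : QT ι m n) :
    hatT P (hatT Q A) = hatT (P * Q) A := by
  funext ν i j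
  simp only [hatT, mul_apply, Finset.mul_sum, Finset.sum_mul, mul_assoc]
  exact Finset.sum_comm

lemma frob_sq (X : QT ι m n) : frob X ^ 2 = ∑ ν, ∑ i, ∑ j, ‖X ν i j‖ ^ 2 :=
  Real.sq_sqrt (by positivity)

lemma tubeNorm_sq (X : QT ι m n) (k : ℕ) : tubeNorm X k ^ 2 = ∑ ν, ‖diagTube X k ν‖ ^ 2 :=
  Real.sq_sqrt (by positivity)

lemma frob_sq_eq_sum_frobM_sq (X : QT ι m n) : frob X ^ 2 = ∑ ν, frobM (X ν) ^ 2 := by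
  simp only [frob_sq, frobM_sq]

lemma diagTube_hatT (X : QT ι m n) (k : ℕ) : diagTube (hatT T X) k = T *ᵥ diagTube X k := by
  funext ν
  by_cases hk : k < m ∧ k < n
  · simp only [diagTube, dif_pos hk, hatT, mulVec, dotProduct]
  · simp [diagTube, hk, mulVec, dotProduct]

variable [DecidableEq ι]

lemma hatT_one (A : QT ι m n) : hatT (1 : Matrix ι ι ℍ[ℝ]) A = A := by
  funext ν i j
  simp [hatT, one_apply]

lemma hatT_hatT_of_mul_eq_one (hTS : T * S = 1) (A : QT ι m n) : hatT T (hatT S A) = A := by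
  rw [hatT_hatT_s14, hTS, hatT_one]

lemma hatT_qt (hTS : T * S = 1) (A : QT ι m p) (B : QT ι p n) (ν : ι) :
    hatT T (qt T S A B) ν = hatT T A ν * hatT T B ν := by
  rw [qt, hatT_hatT_of_mul_eq_one hTS, qf]

lemma hatT_qtH (hTS : T * S = 1) (A : QT ι m n) (ν : ι) :
    hatT T (qtH T S A) ν = (hatT T A ν)ᴴ := by
  rw [qtH, hatT_hatT_of_mul_eq_one hTS]

lemma qtUnitary.conjTranspose_hatT_mul_hatT (hTS : T * S = 1) {U : QT ι p p}
    (hU : qtUnitary T S U) (ν : ι) : (hatT T U ν)ᴴ * hatT T U ν = 1 := by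
  have h := congrFun (congrArg (hatT T) hU.1) ν
  rwa [hatT_qt hTS, hatT_qtH hTS, qtId, hatT_hatT_of_mul_eq_one hTS] at h

lemma frob_hatT_of_conjTranspose_mul_self (hT : Tᴴ * T = 1) (X : QT ι m n) :
    frob (hatT T X) = frob X := by
  unfold frob
  congr 1
  rw [Finset.sum_comm, Finset.sum_comm (f := fun ν i => ∑ j, ‖X ν i j‖ ^ 2)]
  refine Finset.sum_congr rfl fun i _ => ?_
  rw [Finset.sum_comm, Finset.sum_comm (f := fun ν j => ‖X ν i j‖ ^ 2)]
  exact Finset.sum_congr rfl fun j _ =>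
    sum_norm_sq_mulVec_of_conjTranspose_mul_self hT fun μ => X μ i j

lemma tubeNorm_hatT_of_conjTranspose_mul_self (hT : Tᴴ * T = 1) (X : QT ι m n) (k : ℕ) :
    tubeNorm (hatT T X) k = tubeNorm X k := by
  rw [tubeNorm, diagTube_hatT, sum_norm_sq_mulVec_of_conjTranspose_mul_self hT, tubeNorm]

end Tensor

section FDiagonal

variable {ι : Type*} {m n : ℕ}

def IsFDiagonal (X : QT ι m n) : Prop :=
  ∀ ν (i : Fin m) (j : Fin n), (i : ℕ) ≠ j → X ν i j = 0

lemma IsFDiagonal.sum_norm_sq_row {X : QT ι m n} (hX : IsFDiagonal X) (ν : ι) (i : Fin m) :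
    ∑ j, ‖X ν i j‖ ^ 2 = ‖diagTube X i ν‖ ^ 2 := by
  by_cases hi : (i : ℕ) < n
  · rw [Finset.sum_eq_single ⟨i, hi⟩ fun j _ hj => by
      rw [hX ν i j fun h => hj (Fin.ext h.symm), norm_zero, sq, zero_mul]]
    · simp [diagTube, hi]
    · simp
  · rw [Finset.sum_eq_zero fun j _ => by
      rw [hX ν i j (by omega), norm_zero, sq, zero_mul]]
    simp [diagTube, hi]

lemma IsFDiagonal.frob_sq_eq_sum_tubeNorm_sq [Fintype ι] {X : QT ι m n} (hX : IsFDiagonal X) :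
    frob X ^ 2 = ∑ k ∈ Finset.range (min m n), tubeNorm X k ^ 2 := by
  have hzero : ∀ k ∈ Finset.range m, k ∉ Finset.range (min m n) →
      ∑ ν, ‖diagTube X k ν‖ ^ 2 = 0 := fun k hkm hk => by
    simp only [Finset.mem_range, Nat.lt_min, not_and] at hkm hk
    simp [diagTube, hk hkm]
  simp only [frob_sq, tubeNorm_sq, hX.sum_norm_sq_row]
  rw [Finset.sum_comm, Fin.sum_univ_eq_sum_range (fun k => ∑ ν, ‖diagTube X k ν‖ ^ 2),
    Finset.sum_subset (Finset.range_subset_range.2 (min_le_left m n)) hzero]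

end FDiagonal

theorem stmt14_general {ι : Type*} [Fintype ι] [DecidableEq ι]
    {K : ℕ} (cs : Fin K → ℝ)
    (U₀ : Matrix ι ι ℍ[ℝ]) (hU₀ : qUnitaryM U₀)
    (T S : Matrix ι ι ℍ[ℝ]) (hT : T = (∏ k, cs k) • U₀) (hS : S = (∏ k, cs k)⁻¹ • U₀ᴴ)
    (hc1 : (∏ k, |cs k|) = 1)
    {N1 N2 : ℕ} (A : QT ι N1 N2) (U : QT ι N1 N1) (D : QT ι N1 N2) (V : QT ι N2 N2)
    (hU : qtUnitary T S U) (hV : qtUnitary T S V)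
    (σ : ι → ℕ → ℝ) (hD : ∀ ν, hatT T D ν = realDiag N1 N2 (σ ν))
    (hA : A = qt T S U (qt T S D (qtH T S V)))
    :
    frob A ^ 2 = ∑ k ∈ Finset.range (min N1 N2), tubeNorm D k ^ 2 := by
  have hc : |∏ k, cs k| = 1 := by rwa [Finset.abs_prod]
  have hTu : qUnitaryM T := hT ▸ hU₀.real_smul hc
  have hTS : T * S = 1 := by
    rw [hS, inv_smul_conjTranspose_of_abs_eq_one hc, ← hT]
    exact hTu.2
  have hslice : ∀ ν, frobM (hatT T A ν) = frobM (hatT T D ν) := fun ν => by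
    rw [hA, hatT_qt hTS, hatT_qt hTS, hatT_qtH hTS,
      frobM_mul_left_of_conjTranspose_mul_self (hU.conjTranspose_hatT_mul_hatT hTS ν),
      frobM_mul_conjTranspose_of_conjTranspose_mul_self (hV.conjTranspose_hatT_mul_hatT hTS ν)]
  have hDiag : IsFDiagonal (hatT T D) := fun ν i j hij => by simp [hD, realDiag, hij]
  calc frob A ^ 2 = frob (hatT T A) ^ 2 := by rw [frob_hatT_of_conjTranspose_mul_self hTu.1]
    _ = frob (hatT T D) ^ 2 := by simp only [frob_sq_eq_sum_frobM_sq, hslice]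
    _ = ∑ k ∈ Finset.range (min N1 N2), tubeNorm (hatT T D) k ^ 2 :=
      hDiag.frob_sq_eq_sum_tubeNorm_sq
    _ = ∑ k ∈ Finset.range (min N1 N2), tubeNorm D k ^ 2 := by
      simp only [tubeNorm_hatT_of_conjTranspose_mul_self hTu.1]

/-- Frobenius norm identity from the TQt-SVD when `∏ |cₙ| = 1`. -/
theorem stmt14 {ι : Type*} [Fintype ι] [DecidableEq ι]
    {K : ℕ} (cs : Fin K → ℝ) (hcs : ∀ k, cs k ≠ 0)
    (U₀ : Matrix ι ι ℍ[ℝ]) (hU₀ : qUnitaryM U₀)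
    (T S : Matrix ι ι ℍ[ℝ]) (hT : T = (∏ k, cs k) • U₀) (hS : S = (∏ k, cs k)⁻¹ • U₀ᴴ)
    (hc1 : (∏ k, |cs k|) = 1)
    {N1 N2 : ℕ} (A : QT ι N1 N2) (U : QT ι N1 N1) (D : QT ι N1 N2) (V : QT ι N2 N2)
    (hU : qtUnitary T S U) (hV : qtUnitary T S V)
    (σ : ι → ℕ → ℝ) (hD : ∀ ν, hatT T D ν = realDiag N1 N2 (σ ν))
    (hσ0 : ∀ ν k, 0 ≤ σ ν k) (hσa : ∀ ν, Antitone (σ ν))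
    (hA : A = qt T S U (qt T S D (qtH T S V)))
    :
    frob A ^ 2 = ∑ k ∈ Finset.range (min N1 N2), tubeNorm D k ^ 2 :=
  stmt14_general cs U₀ hU₀ T S hT hS hc1 A U D V hU hV σ hD hA
end
end
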